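/- arXiv:2507.14720 — 2 statements merged into one kernel-verified Lean document; each statement's English description precedes it below -/
import Mathlib

section
/- The number of isomorphism classes of nested matroids of rank r on n elements equals the binomial coefficient C(n, r). -/
open Set Matroid
open scoped Matroid

namespace MatroidPaper

variable {α : Type*} {β : Type*}

/-- A circuit of a matroid is a minimal dependent set. -/
def Circuit (M : Matroid α) (C : Set α) : Prop := Minimal M.Dep C

/-- A set is cyclic if it is a union of circuits. -/
def Cyclic (M : Matroid α) (X : Set α) : Prop :=
  ∃ S : Set (Set α), (∀ C ∈ S, Circuit M C) ∧ X = ⋃₀ S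

/-- A cyclic flat is a flat that is a union of circuits. -/
def CyclicFlat (M : Matroid α) (F : Set α) : Prop := M.IsFlat F ∧ Cyclic M F

/-- The rank of a set in a matroid: the supremum of sizes of independent subsets. -/
noncomputable def rk (M : Matroid α) (X : Set α) : ℕ :=
  sSup {n | ∃ I, I ⊆ X ∧ M.Indep I ∧ I.ncard = n}

/-- `e` is a loop of `M`. -/
def Loop (M : Matroid α) (e : α) : Prop := M.Dep {e}

/-- `e` is a coloop of `M`, i.e. a loop of the dual. -/
def Coloop (M : Matroid α) (e : α) : Prop := M✶.Dep {e}

/-- Deletion of a set of elements. -/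
def delete (M : Matroid α) (D : Set α) : Matroid α := M ↾ (M.E \ D)

/-- Contraction of a set of elements. -/
def contract (M : Matroid α) (C : Set α) : Matroid α := (delete M✶ C)✶

open Classical in
/-- The Tutte polynomial of a (finite) matroid, as a polynomial in two
variables `X 0` (usually `x`) and `X 1` (usually `y`). -/
noncomputable def tutte (M : Matroid α) : MvPolynomial (Fin 2) ℤ :=
  if hE : M.E.Finite then
    ∑ A ∈ hE.toFinset.powerset,
      (MvPolynomial.X 0 - 1) ^ (rk M M.E - rk M ↑A) *
        (MvPolynomial.X 1 - 1) ^ (A.card - rk M ↑A)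
  else 0

/-- The coefficient of `x^i y^j` in the Tutte polynomial. -/
noncomputable def tcoeff (M : Matroid α) (i j : ℕ) : ℤ :=
  MvPolynomial.coeff (Finsupp.single 0 i + Finsupp.single 1 j) (tutte M)

/-- Matroid isomorphism. -/
def Iso (M : Matroid α) (N : Matroid β) : Prop :=
  ∃ (f : α → β) (hf : Set.InjOn f M.E), M.map f hf = N

/-- A matroid is connected if it is nonempty and every two distinct elements
lie in a common circuit. -/
def Connected (M : Matroid α) : Prop :=
  M.E.Nonempty ∧ ∀ ⦃e f⦄, e ∈ M.E → f ∈ M.E → e ≠ f →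
    ∃ C, Circuit M C ∧ e ∈ C ∧ f ∈ C

/-- The connected component of an element. -/
def component (M : Matroid α) (e : α) : Set α :=
  {f | f ∈ M.E ∧ Relation.ReflTransGen (fun x y => ∃ C, Circuit M C ∧ x ∈ C ∧ y ∈ C) e f}

/-- The number of connected components of a matroid. -/
noncomputable def numComponents (M : Matroid α) : ℕ :=
  Set.ncard {X : Set α | ∃ e ∈ M.E, X = component M e}

/-- A matroid is simple if all sets of at most two elements of the ground set
are independent. -/
def Simple (M : Matroid α) : Prop :=
  ∀ ⦃e f⦄, e ∈ M.E → f ∈ M.E → M.Indep {e, f}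

/-- A set of edges of a complete graph is a forest if no edge is a loop and
every nonempty subset uses more vertices than it has edges. -/
def IsForest {n : ℕ} (X : Set (Sym2 (Fin n))) : Prop :=
  (∀ e ∈ X, ¬ e.IsDiag) ∧
    ∀ Y ⊆ X, Y.Nonempty → Y.ncard < {v | ∃ e ∈ Y, v ∈ e}.ncard

/-- `M` is isomorphic to the cycle matroid of the complete graph `K n`. -/
def IsCycleMatroidK (M : Matroid α) (n : ℕ) : Prop :=
  ∃ f : α → Sym2 (Fin n), Set.BijOn f M.E {e | ¬ e.IsDiag} ∧
    ∀ I ⊆ M.E, (M.Indep I ↔ IsForest (f '' I))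


/-- A matroid is nested if its cyclic flats form a chain under inclusion. -/
def Nested (M : Matroid α) : Prop :=
  ∀ ⦃F G⦄, CyclicFlat M F → CyclicFlat M G → F ⊆ G ∨ G ⊆ F


/-- cardinality of a prefix set in `Fin n` -/
lemma ncard_prefix (n : ℕ) {m : ℕ} (h : m ≤ n) : ({x : Fin n | (x : ℕ) < m}).ncard = m := by
  have : {x : Fin n | (x : ℕ) < m} = Set.range (fun i : Fin m => (⟨(i : ℕ), lt_of_lt_of_le i.2 h⟩ : Fin n)) := by
    ext x
    simp only [mem_setOf_eq, Set.mem_range]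
    constructor
    · intro hx; exact ⟨⟨x, hx⟩, rfl⟩
    · rintro ⟨i, rfl⟩; exact i.2
  rw [this, Set.ncard_eq_toFinset_card', Set.toFinset_range, Finset.card_image_of_injective]
  · simp
  · intro a b hab
    simpa [Fin.ext_iff] using hab

lemma ncard_prefix_le (n m : ℕ) : ({x : Fin n | (x : ℕ) < m}).ncard ≤ m := by
  rcases le_or_gt m n with h | h
  · rw [ncard_prefix n h]
  · calc ({x : Fin n | (x : ℕ) < m}).ncard ≤ (univ : Set (Fin n)).ncard :=
        Set.ncard_le_ncard (subset_univ _) (Set.finite_univ)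
      _ = n := by simp [Set.ncard_univ]
      _ ≤ m := h.le

lemma ncard_suffix (m : ℕ) {c : ℕ} (h : c ≤ m) : ({i : Fin m | c ≤ (i : ℕ)}).ncard = m - c := by
  have heq : {i : Fin m | c ≤ (i : ℕ)} = (univ : Set (Fin m)) \ {i : Fin m | (i : ℕ) < c} := by
    ext i; simp [not_lt]
  rw [heq, Set.ncard_diff (subset_univ _), Set.ncard_univ, Nat.card_eq_fintype_card,
    Fintype.card_fin, ncard_prefix m h]

variable {n : ℕ}

lemma rk_bddAbove (M : Matroid (Fin n)) (X : Set (Fin n)) :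
    BddAbove {k | ∃ I, I ⊆ X ∧ M.Indep I ∧ I.ncard = k} := by
  refine ⟨n, fun k hk => ?_⟩
  obtain ⟨I, _, _, rfl⟩ := hk
  calc I.ncard ≤ (univ : Set (Fin n)).ncard := Set.ncard_le_ncard (subset_univ _) Set.finite_univ
    _ = n := by simp [Set.ncard_univ]

lemma rk_nonempty (M : Matroid (Fin n)) (X : Set (Fin n)) :
    Set.Nonempty {k | ∃ I, I ⊆ X ∧ M.Indep I ∧ I.ncard = k} :=
  ⟨0, ∅, empty_subset _, M.empty_indep, Set.ncard_empty _⟩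

lemma ncard_le_rk {M : Matroid (Fin n)} {I X : Set (Fin n)} (hIX : I ⊆ X) (hI : M.Indep I) :
    I.ncard ≤ rk M X :=
  le_csSup (rk_bddAbove M X) ⟨I, hIX, hI, rfl⟩

lemma rk_le_of_forall {M : Matroid (Fin n)} {X : Set (Fin n)} {b : ℕ}
    (h : ∀ I, I ⊆ X → M.Indep I → I.ncard ≤ b) : rk M X ≤ b := by
  refine csSup_le (rk_nonempty M X) ?_
  rintro k ⟨I, hIX, hI, rfl⟩
  exact h I hIX hI

lemma exists_rk_witness (M : Matroid (Fin n)) (X : Set (Fin n)) :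
    ∃ I, I ⊆ X ∧ M.Indep I ∧ I.ncard = rk M X :=
  Nat.sSup_mem (rk_nonempty M X) (rk_bddAbove M X)

lemma rk_mono {M : Matroid (Fin n)} {X Y : Set (Fin n)} (h : X ⊆ Y) : rk M X ≤ rk M Y :=
  rk_le_of_forall fun I hIX hI => ncard_le_rk (hIX.trans h) hI

lemma rk_empty (M : Matroid (Fin n)) : rk M (∅ : Set (Fin n)) = 0 :=
  Nat.le_zero.mp (rk_le_of_forall fun I hIX _ => by
    rw [subset_empty_iff.mp hIX]; simp)

lemma rk_insert_le {M : Matroid (Fin n)} {X : Set (Fin n)} (x : Fin n) :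
    rk M (insert x X) ≤ rk M X + 1 := by
  refine rk_le_of_forall fun I hIX hI => ?_
  have h1 : I \ {x} ⊆ X := by
    intro y hy
    rcases hIX hy.1 with h | h
    · exact absurd h hy.2
    · exact h
  have h2 : (I \ {x}).ncard ≤ rk M X := ncard_le_rk h1 (hI.subset diff_subset)
  have h3 : I.ncard ≤ (I \ {x}).ncard + 1 := by
    rcases em (x ∈ I) with hx | hx
    · rw [Set.ncard_diff_singleton_of_mem hx]
      have : 1 ≤ I.ncard := (Set.ncard_pos (Set.toFinite I)).mpr ⟨x, hx⟩
      omega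
    · rw [Set.diff_singleton_eq_self hx]; omega
  omega

lemma rk_closure_eq {M : Matroid (Fin n)} {X : Set (Fin n)} (hX : X ⊆ M.E) :
    rk M (M.closure X) = rk M X := by
  refine le_antisymm ?_ (rk_mono (M.subset_closure X hX))
  refine rk_le_of_forall fun I hIX hI => ?_
  obtain ⟨J, hJ⟩ := M.exists_isBasis X hX
  have hJc : M.IsBasis J (M.closure X) := hJ.isBasis_closure_right
  obtain ⟨J', hJ', hIJ'⟩ := hI.subset_isBasis_of_subset hIX (M.closure_subset_ground X)
  have hcard : J'.encard = J.encard := hJ'.encard_eq_encard hJc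
  have : J'.ncard = J.ncard := by
    rw [Set.ncard_def, Set.ncard_def, hcard]
  calc I.ncard ≤ J'.ncard := Set.ncard_le_ncard hIJ' (Set.toFinite J')
    _ = J.ncard := this
    _ ≤ rk M X := ncard_le_rk hJ.subset hJ.indep


section Circuits

variable {n : ℕ} {M : Matroid (Fin n)} {C X : Set (Fin n)}

lemma exists_circuit_subset (X : Set (Fin n)) (hdep : M.Dep X) :
    ∃ C, C ⊆ X ∧ Circuit M C := by
  have key : ∀ k (X : Set (Fin n)), X.ncard ≤ k → M.Dep X → ∃ C, C ⊆ X ∧ Circuit M C := by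
    intro k
    induction k with
    | zero =>
      intro X hX hdep
      exfalso
      have hXe : X = ∅ := (Set.ncard_eq_zero (Set.toFinite X)).mp (Nat.le_zero.mp hX)
      rw [hXe] at hdep
      exact hdep.1 M.empty_indep
    | succ k ih =>
      intro X hX hdep
      by_cases h : ∃ Y, Y ⊂ X ∧ M.Dep Y
      · obtain ⟨Y, hYX, hY⟩ := h
        have hk : Y.ncard ≤ k := by
          have := Set.ncard_lt_ncard hYX (Set.toFinite X); omega
        obtain ⟨C, hCY, hC⟩ := ih Y hk hY
        exact ⟨C, hCY.trans hYX.subset, hC⟩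
      · refine ⟨X, subset_rfl, hdep, fun Y hY hYX => ?_⟩
        by_contra hXY
        exact h ⟨Y, ssubset_of_subset_not_subset hYX hXY, hY⟩
  exact key X.ncard X le_rfl hdep

lemma Circuit.diff_indep (hC : Circuit M C) {x : Fin n} (hx : x ∈ C) :
    M.Indep (C \ {x}) := by
  by_contra h
  have hdep : M.Dep (C \ {x}) := ⟨h, diff_subset.trans hC.1.2⟩
  exact (hC.2 hdep diff_subset hx).2 rfl

lemma Circuit.nonempty (hC : Circuit M C) : C.Nonempty := by
  rw [Set.nonempty_iff_ne_empty]
  rintro rfl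
  exact hC.1.1 M.empty_indep

lemma rk_circuit (hC : Circuit M C) : rk M C = C.ncard - 1 := by
  refine le_antisymm (rk_le_of_forall fun I hIC hI => ?_) ?_
  · have hne : I ≠ C := fun h => hC.1.1 (h ▸ hI)
    have hlt : I.ncard < C.ncard :=
      Set.ncard_lt_ncard (HasSubset.Subset.ssubset_of_ne hIC hne) (Set.toFinite C)
    omega
  · obtain ⟨x, hx⟩ := hC.nonempty
    have h1 := ncard_le_rk diff_subset (hC.diff_indep hx)
    rwa [Set.ncard_diff_singleton_of_mem hx] at h1

lemma flat_closure (M : Matroid (Fin n)) (X : Set (Fin n)) : M.IsFlat (M.closure X) := by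
  rw [Matroid.closure_def, Set.sInter_eq_iInter]
  haveI hne : Nonempty ↑{F | M.IsFlat F ∧ X ∩ M.E ⊆ F} :=
    ⟨⟨M.E, M.ground_isFlat, inter_subset_right⟩⟩
  exact Matroid.IsFlat.iInter fun F => F.2.1

lemma cyclicFlat_closure_circuit (hC : Circuit M C) : CyclicFlat M (M.closure C) := by
  have hCE : C ⊆ M.E := hC.1.2
  refine ⟨flat_closure M C, {D | Circuit M D ∧ D ⊆ M.closure C}, fun D hD => hD.1, ?_⟩
  apply subset_antisymm
  · intro e he
    by_cases heC : e ∈ C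
    · exact ⟨C, ⟨hC, M.subset_closure C hCE⟩, heC⟩
    · obtain ⟨I, hI⟩ := M.exists_isBasis C hCE
      have hecl : e ∈ M.closure I := by rw [hI.closure_eq_closure]; exact he
      have heI : e ∉ I := fun h => heC (hI.subset h)
      have hdep : M.Dep (insert e I) := by
        rcases (hI.indep.mem_closure_iff).mp hecl with h | h
        · exact h
        · exact absurd h heI
      obtain ⟨D, hDsub, hD⟩ := exists_circuit_subset _ hdep
      have hDe : e ∈ D := by
        by_contra heD
        have hDI : D ⊆ I := fun x hx => ((hDsub hx).resolve_left fun hxe => heD (hxe ▸ hx))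
        exact hD.1.1 (hI.indep.subset hDI)
      refine ⟨D, ⟨hD, hDsub.trans ?_⟩, hDe⟩
      intro x hx
      rcases hx with rfl | hxI
      · exact he
      · exact M.subset_closure C hCE (hI.subset hxI)
  · rintro x ⟨D, ⟨_, hDcl⟩, hxD⟩
    exact hDcl hxD

end Circuits

section Nw

variable {n : ℕ}

/-- prefix set in `Fin n` -/
def pref (n m : ℕ) : Set (Fin n) := {j : Fin n | (j : ℕ) < m}

lemma mem_pref {m : ℕ} {j : Fin n} : j ∈ pref n m ↔ (j : ℕ) < m := Iff.rfl

lemma pref_n_eq_univ : pref n n = univ := by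
  ext j; simpa [pref] using j.2

lemma pref_eq_univ_of_le {m : ℕ} (h : n ≤ m) : pref n m = univ := by
  ext j; simpa [pref] using lt_of_lt_of_le j.2 h

/-- number of `true`s among the first `m` letters of `w` -/
noncomputable def cnt (w : Fin n → Bool) (m : ℕ) : ℕ := ({j : Fin n | (j : ℕ) < m ∧ w j = true}).ncard

lemma cnt_zero (w : Fin n → Bool) : cnt w 0 = 0 := by
  simp [cnt]

lemma cnt_mono (w : Fin n → Bool) {m m' : ℕ} (h : m ≤ m') : cnt w m ≤ cnt w m' :=
  Set.ncard_le_ncard (fun j hj => ⟨lt_of_lt_of_le hj.1 h, hj.2⟩) (Set.toFinite _)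

lemma cnt_stab (w : Fin n → Bool) {m : ℕ} (h : n ≤ m) : cnt w m = cnt w n := by
  unfold cnt
  congr 1
  ext j
  simp only [mem_setOf_eq, and_congr_left_iff]
  intro _
  simp [j.2, lt_of_lt_of_le j.2 h]

lemma cnt_succ (w : Fin n → Bool) {m : ℕ} (h : m < n) :
    cnt w (m + 1) = cnt w m + (if w ⟨m, h⟩ = true then 1 else 0) := by
  by_cases hw : w ⟨m, h⟩ = true
  · rw [if_pos hw]
    have hset : {j : Fin n | (j : ℕ) < m + 1 ∧ w j = true}
        = insert ⟨m, h⟩ {j : Fin n | (j : ℕ) < m ∧ w j = true} := by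
      ext j
      simp only [mem_setOf_eq, Set.mem_insert_iff]
      constructor
      · rintro ⟨hj1, hj2⟩
        rcases Nat.lt_succ_iff_lt_or_eq.mp hj1 with h' | h'
        · exact Or.inr ⟨h', hj2⟩
        · exact Or.inl (Fin.ext (by simpa using h'))
      · rintro (rfl | ⟨hj1, hj2⟩)
        · exact ⟨Nat.lt_succ_self m, hw⟩
        · exact ⟨Nat.lt_succ_of_lt hj1, hj2⟩
    rw [cnt, hset, Set.ncard_insert_of_notMem (by simp) (Set.toFinite _)]
    rfl
  · rw [if_neg hw]
    unfold cnt
    congr 1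
    ext j
    simp only [mem_setOf_eq, and_congr_left_iff]
    intro hj
    constructor
    · intro h1
      rcases Nat.lt_succ_iff_lt_or_eq.mp h1 with h' | h'
      · exact h'
      · exact absurd ((Fin.ext (n := n) (a := j) (b := ⟨m, h⟩) (by simpa using h')) ▸ hj) hw
    · exact Nat.lt_succ_of_lt
  
lemma cnt_succ_le (w : Fin n → Bool) (m : ℕ) : cnt w (m + 1) ≤ cnt w m + 1 := by
  rcases lt_or_ge m n with h | h
  · rw [cnt_succ w h]; split <;> omega
  · rw [cnt_stab w (le_trans h (Nat.le_succ m)), cnt_stab w h]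
    omega

lemma cnt_le_add (w : Fin n → Bool) {a b : ℕ} (hab : a ≤ b) :
    cnt w b ≤ cnt w a + (b - a) := by
  induction b with
  | zero =>
    have : a = 0 := Nat.le_zero.mp hab
    subst this; omega
  | succ b ih =>
    rcases Nat.lt_succ_iff_lt_or_eq.mp (Nat.lt_succ_of_le hab) with h' | h'
    · have := ih (by omega)
      have := cnt_succ_le w b
      omega
    · subst h'; omega

lemma cnt_le_self (w : Fin n → Bool) (m : ℕ) : cnt w m ≤ m := by
  have := cnt_le_add w (Nat.zero_le m)
  rw [cnt_zero] at this
  omega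

/-- independence in the nested matroid given by word `w` -/
def NwIndep (w : Fin n → Bool) (I : Set (Fin n)) : Prop :=
  ∀ m : ℕ, (I ∩ pref n m).ncard ≤ cnt w m

lemma nwIndep_empty (w : Fin n → Bool) : NwIndep w ∅ := fun m => by
  simp

lemma nwIndep_subset {w : Fin n → Bool} {I J : Set (Fin n)} (hJ : NwIndep w J) (hIJ : I ⊆ J) :
    NwIndep w I := fun m =>
  le_trans (Set.ncard_le_ncard (inter_subset_inter_left _ hIJ) (Set.toFinite _)) (hJ m)

lemma nwIndep_aug {w : Fin n → Bool} {I J : Set (Fin n)} (hI : NwIndep w I) (hJ : NwIndep w J)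
    (hlt : I.ncard < J.ncard) : ∃ e ∈ J, e ∉ I ∧ NwIndep w (insert e I) := by
  classical
  by_contra hcon
  push_neg at hcon
  -- for each e in J \ I there is a tight prefix m ≤ n with e < m
  have key : ∀ e ∈ J \ I, ∃ m, m ≤ n ∧ (e : ℕ) < m ∧ (I ∩ pref n m).ncard = cnt w m := by
    rintro e ⟨heJ, heI⟩
    obtain ⟨m, hm⟩ := not_forall.mp (hcon e heJ heI)
    push_neg at hm
    have hm' : cnt w m < ((insert e I) ∩ pref n m).ncard := hm
    have hem : (e : ℕ) < m := by
      by_contra he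
      have : (insert e I) ∩ pref n m = I ∩ pref n m := by
        ext x
        simp only [Set.mem_inter_iff, Set.mem_insert_iff, mem_pref]
        constructor
        · rintro ⟨rfl | hx, hx2⟩
          · omega
          · exact ⟨hx, hx2⟩
        · rintro ⟨hx, hx2⟩; exact ⟨Or.inr hx, hx2⟩
      rw [this] at hm'
      exact absurd (hI m) (not_le.mpr hm')
    have hsub : (insert e I) ∩ pref n m ⊆ insert e (I ∩ pref n m) := by
      rintro x ⟨rfl | hx, hx2⟩
      · exact Set.mem_insert _ _
      · exact Set.mem_insert_of_mem _ ⟨hx, hx2⟩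
    have h1 : ((insert e I) ∩ pref n m).ncard ≤ (I ∩ pref n m).ncard + 1 :=
      le_trans (Set.ncard_le_ncard hsub (Set.toFinite _)) (Set.ncard_insert_le _ _)
    have htight : (I ∩ pref n m).ncard = cnt w m := le_antisymm (hI m) (by omega)
    rcases le_or_gt m n with hmn | hmn
    · exact ⟨m, hmn, hem, htight⟩
    · refine ⟨n, le_rfl, e.2, ?_⟩
      rw [pref_eq_univ_of_le hmn.le, ← pref_n_eq_univ (n := n)] at htight
      rw [htight, cnt_stab w hmn.le]
  -- pick the max such prefix
  have hJI : (J \ I).Nonempty := by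
    rw [Set.nonempty_iff_ne_empty]
    intro hempty
    have hsub : J ⊆ I := by
      intro x hx
      by_contra hxI
      exact absurd hempty (Set.nonempty_iff_ne_empty.mp ⟨x, hx, hxI⟩)
    exact absurd (Set.ncard_le_ncard hsub (Set.toFinite I)) (not_le.mpr hlt)
  choose! f hf1 hf2 hf3 using key
  set T : Finset (Fin n) := (J \ I).toFinset with hT
  have hTne : T.Nonempty := by
    rwa [hT, Set.toFinset_nonempty]
  set m0 := T.sup f with hm0
  obtain ⟨e0, he0T, he0⟩ := Finset.exists_mem_eq_sup T hTne f
  have he0JI : e0 ∈ J \ I := by rwa [hT, Set.mem_toFinset] at he0T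
  have htight0 : (I ∩ pref n m0).ncard = cnt w m0 := by
    rw [hm0, he0]; exact hf3 e0 he0JI
  have hall : ∀ e ∈ J \ I, (e : ℕ) < m0 := by
    intro e he
    have h1 : f e ≤ m0 := Finset.le_sup (by rwa [hT, Set.mem_toFinset])
    have := hf2 e he
    omega
  -- counting contradiction at m0
  have hsplitJ : (J ∩ pref n m0) = (J \ I) ∪ ((J ∩ I) ∩ pref n m0) := by
    ext x
    simp only [Set.mem_inter_iff, Set.mem_union, Set.mem_diff, mem_pref]
    constructor
    · rintro ⟨hxJ, hxm⟩
      by_cases hxI : x ∈ I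
      · exact Or.inr ⟨⟨hxJ, hxI⟩, hxm⟩
      · exact Or.inl ⟨hxJ, hxI⟩
    · rintro (⟨hxJ, hxI⟩ | ⟨⟨hxJ, _⟩, hxm⟩)
      · exact ⟨hxJ, hall x ⟨hxJ, hxI⟩⟩
      · exact ⟨hxJ, hxm⟩
  have hdisjJ : Disjoint (J \ I) ((J ∩ I) ∩ pref n m0) := by
    rw [Set.disjoint_left]
    rintro x ⟨_, hxI⟩ ⟨⟨_, hxI'⟩, _⟩
    exact hxI hxI'
  have hcardJ : (J ∩ pref n m0).ncard = (J \ I).ncard + ((J ∩ I) ∩ pref n m0).ncard := by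
    rw [hsplitJ, Set.ncard_union_eq hdisjJ (Set.toFinite _) (Set.toFinite _)]
  have hsplitI : (I ∩ pref n m0) = ((I \ J) ∩ pref n m0) ∪ ((J ∩ I) ∩ pref n m0) := by
    ext x
    simp only [Set.mem_inter_iff, Set.mem_union, Set.mem_diff, mem_pref]
    constructor
    · rintro ⟨hxI, hxm⟩
      by_cases hxJ : x ∈ J
      · exact Or.inr ⟨⟨hxJ, hxI⟩, hxm⟩
      · exact Or.inl ⟨⟨hxI, hxJ⟩, hxm⟩
    · rintro (⟨⟨hxI, _⟩, hxm⟩ | ⟨⟨_, hxI⟩, hxm⟩) <;> exact ⟨hxI, hxm⟩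
  have hdisjI : Disjoint ((I \ J) ∩ pref n m0) ((J ∩ I) ∩ pref n m0) := by
    rw [Set.disjoint_left]
    rintro x ⟨⟨_, hxJ⟩, _⟩ ⟨⟨hxJ', _⟩, _⟩
    exact hxJ hxJ'
  have hcardI : (I ∩ pref n m0).ncard = ((I \ J) ∩ pref n m0).ncard + ((J ∩ I) ∩ pref n m0).ncard := by
    rw [hsplitI, Set.ncard_union_eq hdisjI (Set.toFinite _) (Set.toFinite _)]
  have hIJdiff : (I \ J).ncard < (J \ I).ncard := by
    have h1 : (I \ J).ncard + (I ∩ J).ncard = I.ncard := by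
      rw [← Set.ncard_union_eq (Set.disjoint_of_subset_right inter_subset_right
        Set.disjoint_sdiff_left) (Set.toFinite _) (Set.toFinite _), Set.diff_union_inter]
    have h2 : (J \ I).ncard + (J ∩ I).ncard = J.ncard := by
      rw [← Set.ncard_union_eq (Set.disjoint_of_subset_right inter_subset_right
        Set.disjoint_sdiff_left) (Set.toFinite _) (Set.toFinite _), Set.diff_union_inter]
    rw [Set.inter_comm I J] at h1
    omega
  have hfin : cnt w m0 < (J ∩ pref n m0).ncard := by
    have h5 : ((I \ J) ∩ pref n m0).ncard ≤ (I \ J).ncard :=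
      Set.ncard_le_ncard inter_subset_left (Set.toFinite _)
    omega
  exact absurd (hJ m0) (not_le.mpr hfin)

/-- the nested matroid associated to the word `w` -/
noncomputable def Nw (w : Fin n → Bool) : Matroid (Fin n) :=
  (IndepMatroid.ofFinite Set.finite_univ (NwIndep w)
    (nwIndep_empty w)
    (fun _ _ hJ hIJ => nwIndep_subset hJ hIJ)
    (fun _ _ hI hJ hlt => nwIndep_aug hI hJ hlt)
    (fun I _ => subset_univ I)).matroid

@[simp] lemma Nw_E (w : Fin n → Bool) : (Nw w).E = univ := rfl

@[simp] lemma Nw_indep_iff {w : Fin n → Bool} {I : Set (Fin n)} :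
    (Nw w).Indep I ↔ NwIndep w I := by
  simp [Nw]

end Nw

section NwProps

variable {n : ℕ}

lemma nwIndep_trues (w : Fin n → Bool) : NwIndep w {j | w j = true} := by
  intro m
  have hset : {j : Fin n | w j = true} ∩ pref n m = {j : Fin n | (j : ℕ) < m ∧ w j = true} := by
    ext j; simp [mem_pref, and_comm]
  rw [hset]
  exact le_rfl

lemma ncard_trues (w : Fin n → Bool) : ({j : Fin n | w j = true}).ncard = cnt w n := by
  unfold cnt
  congr 1
  ext j
  simp [j.2]

lemma rk_Nw_univ (w : Fin n → Bool) : rk (Nw w) univ = cnt w n := by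
  refine le_antisymm (rk_le_of_forall fun I _ hI => ?_) ?_
  · have h := (Nw_indep_iff.mp hI) n
    rwa [pref_n_eq_univ, inter_univ] at h
  · have h := ncard_le_rk (subset_univ _) (Nw_indep_iff.mpr (nwIndep_trues w))
    rwa [ncard_trues] at h

lemma nwIndep_shift {w : Fin n → Bool} {X : Set (Fin n)} {x y : Fin n}
    (hyx : (y : ℕ) ≤ (x : ℕ)) (hxX : x ∈ X) (hyX : y ∉ X)
    (h : NwIndep w (insert y (X \ {x}))) : NwIndep w X := by
  intro m
  refine le_trans ?_ (h m)
  by_cases hym : (y : ℕ) < m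
  · have h1 : (insert y (X \ {x})) ∩ pref n m = insert y ((X \ {x}) ∩ pref n m) := by
      ext z
      simp only [Set.mem_inter_iff, Set.mem_insert_iff, mem_pref]
      constructor
      · rintro ⟨rfl | hz, hzm⟩
        · exact Or.inl rfl
        · exact Or.inr ⟨hz, hzm⟩
      · rintro (rfl | ⟨hz, hzm⟩)
        · exact ⟨Or.inl rfl, hym⟩
        · exact ⟨Or.inr hz, hzm⟩
    have hy' : y ∉ (X \ {x}) ∩ pref n m := fun hc => hyX hc.1.1
    have h2 : ((insert y (X \ {x})) ∩ pref n m).ncard = ((X \ {x}) ∩ pref n m).ncard + 1 := by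
      rw [h1, Set.ncard_insert_of_notMem hy' (Set.toFinite _)]
    have h3 : (X ∩ pref n m) ⊆ insert x ((X \ {x}) ∩ pref n m) := by
      rintro z ⟨hzX, hzm⟩
      by_cases hz : z = x
      · exact Or.inl hz
      · exact Or.inr ⟨⟨hzX, hz⟩, hzm⟩
    have h4 : (X ∩ pref n m).ncard ≤ ((X \ {x}) ∩ pref n m).ncard + 1 :=
      le_trans (Set.ncard_le_ncard h3 (Set.toFinite _)) (Set.ncard_insert_le _ _)
    omega
  · have hxm : ¬ (x : ℕ) < m := by omega
    refine Set.ncard_le_ncard ?_ (Set.toFinite _)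
    rintro z ⟨hzX, hzm⟩
    refine ⟨Or.inr ⟨hzX, ?_⟩, hzm⟩
    rintro rfl
    exact hxm hzm

lemma cyclicFlat_Nw_lower {w : Fin n → Bool} {F : Set (Fin n)} (hF : CyclicFlat (Nw w) F) :
    ∀ i j : Fin n, (i : ℕ) ≤ (j : ℕ) → j ∈ F → i ∈ F := by
  intro i j hij hjF
  by_contra hiF
  obtain ⟨hflat, S, hS, hFS⟩ := hF
  have hex : ∃ C, Circuit (Nw w) C ∧ j ∈ C ∧ C ⊆ F := by
    rw [hFS] at hjF
    obtain ⟨C, hCS, hjC⟩ := hjF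
    exact ⟨C, hS C hCS, hjC, by rw [hFS]; exact fun x hx => ⟨C, hCS, hx⟩⟩
  obtain ⟨C, hC, hjC, hCF⟩ := hex
  have hiC : i ∉ C := fun hmem => hiF (hCF hmem)
  have hX'dep : (Nw w).Dep (insert i (C \ {j})) := by
    refine ⟨?_, subset_univ _⟩
    intro hind
    exact hC.1.1 (Nw_indep_iff.mpr (nwIndep_shift hij hjC hiC (Nw_indep_iff.mp hind)))
  obtain ⟨D, hDsub, hD⟩ := exists_circuit_subset _ hX'dep
  have hiD : i ∈ D := by
    by_contra hiD
    have hsub : D ⊆ C \ {j} := fun x hx => (hDsub hx).resolve_left (fun hxe => hiD (hxe ▸ hx))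
    exact hD.1.1 ((hC.diff_indep hjC).subset hsub)
  have hDj : D \ {i} ⊆ F := by
    intro x hx
    rcases hDsub hx.1 with hxe | hxe
    · exact absurd hxe hx.2
    · exact hCF hxe.1
  have hicl : i ∈ (Nw w).closure (D \ {i}) := by
    have hind : (Nw w).Indep (D \ {i}) := hD.diff_indep hiD
    rw [hind.mem_closure_iff]
    left
    rw [Set.insert_diff_singleton, Set.insert_eq_of_mem hiD]
    exact hD.1
  have hsub : (Nw w).closure (D \ {i}) ⊆ F := by
    have h1 := (Nw w).closure_subset_closure hDj
    rwa [hflat.closure] at h1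
  exact hiF (hsub hicl)

lemma lower_set_eq_pref {D : Set (Fin n)}
    (hD : ∀ i j : Fin n, (i : ℕ) ≤ (j : ℕ) → j ∈ D → i ∈ D) :
    D = pref n (D.ncard) := by
  ext i
  simp only [mem_pref]
  constructor
  · intro hi
    have hsub : {x : Fin n | (x : ℕ) < (i : ℕ) + 1} ⊆ D :=
      fun x hx => hD x i (by simpa [Nat.lt_succ_iff] using hx) hi
    have hcard := ncard_prefix n (show (i : ℕ) + 1 ≤ n from i.2)
    have := Set.ncard_le_ncard hsub (Set.toFinite D)
    omega
  · intro hi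
    by_contra hiD
    have hsub : D ⊆ {x : Fin n | (x : ℕ) < (i : ℕ)} := by
      intro x hx
      have hle : ¬ ((i : ℕ) ≤ (x : ℕ)) := fun hle => hiD (hD i x hle hx)
      show (x : ℕ) < (i : ℕ)
      omega
    have hcard := ncard_prefix n (le_of_lt i.2)
    have := Set.ncard_le_ncard hsub (Set.toFinite _)
    omega

lemma nested_Nw (w : Fin n → Bool) : Nested (Nw w) := by
  intro F G hF hG
  have hF' := lower_set_eq_pref (cyclicFlat_Nw_lower hF)
  have hG' := lower_set_eq_pref (cyclicFlat_Nw_lower hG)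
  rcases le_total F.ncard G.ncard with hle | hle
  · left; rw [hF', hG']; exact fun x hx => lt_of_lt_of_le hx hle
  · right; rw [hF', hG']; exact fun x hx => lt_of_lt_of_le hx hle

end NwProps

section Selection

variable {n : ℕ}

lemma rk_Nw_ge_cnt (w : Fin n → Bool) (X : Set (Fin n)) :
    cnt w (X.ncard) ≤ rk (Nw w) X := by
  classical
  set m := X.ncard with hm
  set t := cnt w m with ht
  have htm : t ≤ m := ht ▸ cnt_le_self w m
  have hcard : X.toFinset.card = m := by rw [hm, Set.ncard_eq_toFinset_card']
  set e := X.toFinset.orderIsoOfFin hcard with he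
  set g : Fin m → Fin n := fun i => (e i : Fin n) with hg
  have hgmono : StrictMono g := fun i j hij => Subtype.coe_lt_coe.mpr (e.lt_iff_lt.mpr hij)
  have hgX : ∀ i, g i ∈ X := fun i => by
    have h := (e i).2; rwa [Set.mem_toFinset] at h
  have hginj : Function.Injective g := hgmono.injective
  set I : Set (Fin n) := g '' {i : Fin m | m - t ≤ (i : ℕ)} with hI
  have hIX : I ⊆ X := by rintro x ⟨i, _, rfl⟩; exact hgX i
  have hIcard : I.ncard = t := by
    rw [hI, Set.ncard_image_of_injective _ hginj, ncard_suffix m (by omega)]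
    omega
  have hInd : NwIndep w I := by
    intro p
    set q := (I ∩ pref n p).ncard with hq
    rcases Nat.eq_zero_or_pos q with hq0 | hq0
    · omega
    · set Sq : Set (Fin m) := {i : Fin m | m - t ≤ (i : ℕ) ∧ ((g i : Fin n) : ℕ) < p} with hSq
      have hIp : I ∩ pref n p = g '' Sq := by
        ext x
        constructor
        · rintro ⟨⟨i, hi, rfl⟩, hxp⟩; exact ⟨i, ⟨hi, hxp⟩, rfl⟩
        · rintro ⟨i, ⟨hi1, hi2⟩, rfl⟩; exact ⟨⟨i, hi1, rfl⟩, hi2⟩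
      have hqS : q = Sq.ncard := by rw [hq, hIp, Set.ncard_image_of_injective _ hginj]
      have hqt : q ≤ t := by
        have hsubq : Sq ⊆ {i : Fin m | m - t ≤ (i : ℕ)} := fun i hi => hi.1
        have h2 := Set.ncard_le_ncard hsubq (Set.toFinite _)
        rw [ncard_suffix m (by omega)] at h2
        omega
      obtain ⟨i0, hi0⟩ : Sq.Nonempty := by
        rw [hqS] at hq0; exact (Set.ncard_pos (Set.toFinite _)).mp hq0
      have hbot : ∀ i : Fin m, (i : ℕ) < m - t → ((g i : Fin n) : ℕ) < p := by
        intro i hi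
        have h1 : i < i0 := Fin.lt_def.mpr (by have := hi0.1; omega)
        have h2 := Fin.lt_def.mp (hgmono h1)
        have h3 := hi0.2
        omega
      have hunion : g '' ({i : Fin m | (i : ℕ) < m - t} ∪ Sq) ⊆ X ∩ pref n p := by
        rintro x ⟨i, hi, rfl⟩
        refine ⟨hgX i, ?_⟩
        rcases hi with hi | hi
        · exact hbot i hi
        · exact hi.2
      have hdisj : Disjoint {i : Fin m | (i : ℕ) < m - t} Sq := by
        rw [Set.disjoint_left]
        rintro i hi ⟨hi2, _⟩
        simp only [mem_setOf_eq] at hi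
        omega
      have hucard : (g '' ({i : Fin m | (i : ℕ) < m - t} ∪ Sq)).ncard = (m - t) + q := by
        rw [Set.ncard_image_of_injective _ hginj,
          Set.ncard_union_eq hdisj (Set.toFinite _) (Set.toFinite _),
          ncard_prefix m (by omega), hqS]
      have hle1 : (m - t) + q ≤ (X ∩ pref n p).ncard := by
        rw [← hucard]
        exact Set.ncard_le_ncard hunion (Set.toFinite _)
      have hle2 : (X ∩ pref n p).ncard ≤ p :=
        le_trans (Set.ncard_le_ncard inter_subset_right (Set.toFinite _)) (ncard_prefix_le n p)
      have harith := cnt_le_add w (show m - t + q ≤ m by omega)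
      have hs : cnt w (m - t + q) ≤ cnt w p := cnt_mono w (by omega)
      omega
  calc t = I.ncard := hIcard.symm
    _ ≤ rk (Nw w) X := ncard_le_rk hIX (Nw_indep_iff.mpr hInd)

/-- the largest size of a set of rank at most `k`; an isomorphism invariant -/
noncomputable def U (M : Matroid (Fin n)) (k : ℕ) : ℕ :=
  sSup {m | ∃ X : Set (Fin n), rk M X ≤ k ∧ X.ncard = m}

lemma U_bddAbove (M : Matroid (Fin n)) (k : ℕ) :
    BddAbove {m | ∃ X : Set (Fin n), rk M X ≤ k ∧ X.ncard = m} := by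
  refine ⟨n, ?_⟩
  rintro m ⟨X, _, rfl⟩
  calc X.ncard ≤ (univ : Set (Fin n)).ncard := Set.ncard_le_ncard (subset_univ _) Set.finite_univ
    _ = n := by simp [Set.ncard_univ]

lemma U_nonempty (M : Matroid (Fin n)) (k : ℕ) :
    Set.Nonempty {m | ∃ X : Set (Fin n), rk M X ≤ k ∧ X.ncard = m} :=
  ⟨0, ∅, by rw [rk_empty]; omega, Set.ncard_empty _⟩

lemma cnt_le_iff_le_U {w : Fin n → Bool} {m k : ℕ} (hm : m ≤ n) :
    cnt w m ≤ k ↔ m ≤ U (Nw w) k := by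
  constructor
  · intro hk
    refine le_csSup (U_bddAbove _ _) ⟨pref n m, ?_, ncard_prefix n hm⟩
    refine rk_le_of_forall fun I hIp hI => ?_
    have h1 := (Nw_indep_iff.mp hI) m
    rw [Set.inter_eq_self_of_subset_left hIp] at h1
    omega
  · intro hle
    by_contra hc
    obtain ⟨X, hrk, hcard⟩ := Nat.sSup_mem (U_nonempty (Nw w) k) (U_bddAbove (Nw w) k)
    have hcard' : X.ncard = U (Nw w) k := hcard
    have h1 : cnt w m ≤ cnt w X.ncard := cnt_mono w (by omega)
    have h2 := rk_Nw_ge_cnt w X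
    omega

end Selection

section IsoLemmas

variable {n : ℕ}

lemma rk_map_image {M : Matroid (Fin n)} {f : Fin n → Fin n} (hf : Set.InjOn f M.E)
    (hinj : Function.Injective f) (X : Set (Fin n)) :
    rk (M.map f hf) (f '' X) = rk M X := by
  unfold rk
  congr 1
  ext k
  constructor
  · rintro ⟨I, hIfX, hInd, rfl⟩
    obtain ⟨I₀, hI₀, rfl⟩ := Matroid.map_indep_iff.mp hInd
    refine ⟨I₀, ?_, hI₀, (Set.ncard_image_of_injective _ hinj).symm⟩
    exact (Set.image_subset_image_iff hinj).mp hIfX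
  · rintro ⟨I, hIX, hInd, rfl⟩
    exact ⟨f '' I, Set.image_mono hIX, hInd.map f hf,
      Set.ncard_image_of_injective _ hinj⟩

lemma U_map {M : Matroid (Fin n)} {f : Fin n → Fin n} (hf : Set.InjOn f M.E)
    (hinj : Function.Injective f) (k : ℕ) :
    U (M.map f hf) k = U M k := by
  have hsurj : Function.Surjective f := Finite.surjective_of_injective hinj
  unfold U
  congr 1
  ext m
  constructor
  · rintro ⟨Y, hY, rfl⟩
    refine ⟨f ⁻¹' Y, ?_, ?_⟩
    · have hYim : f '' (f ⁻¹' Y) = Y := Set.image_preimage_eq _ hsurj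
      rwa [← hYim, rk_map_image hf hinj] at hY
    · rw [← Set.ncard_image_of_injective (f ⁻¹' Y) hinj, Set.image_preimage_eq _ hsurj]
  · rintro ⟨X, hX, rfl⟩
    exact ⟨f '' X, by rwa [rk_map_image hf hinj], Set.ncard_image_of_injective _ hinj⟩

lemma w_eq_of_cnt_eq {w w' : Fin n → Bool} (h : ∀ m, m ≤ n → cnt w m = cnt w' m) : w = w' := by
  funext j
  have h1 := cnt_succ w j.2
  have h2 := cnt_succ w' j.2
  have h3 := h (j : ℕ) (le_of_lt j.2)
  have h4 := h ((j : ℕ) + 1) j.2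
  have hj : (⟨(j : ℕ), j.2⟩ : Fin n) = j := Fin.eta j j.2
  rw [hj] at h1 h2
  cases hw : w j <;> cases hw' : w' j <;> rw [hw] at h1 <;> rw [hw'] at h2 <;>
    simp at h1 h2 <;> omega

lemma w_eq_of_iso {w w' : Fin n → Bool} (hiso : Iso (Nw w) (Nw w')) : w = w' := by
  obtain ⟨f, hf, hmap⟩ := hiso
  have hinj : Function.Injective f := by
    have h := hf
    rw [Nw_E] at h
    exact Set.injOn_univ.mp h
  have hU : ∀ k, U (Nw w') k = U (Nw w) k := fun k => by
    rw [← hmap, U_map hf hinj]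
  refine w_eq_of_cnt_eq fun m hm => ?_
  refine le_antisymm ?_ ?_
  · refine (cnt_le_iff_le_U hm).mpr ?_
    rw [← hU]
    exact (cnt_le_iff_le_U hm).mp le_rfl
  · refine (cnt_le_iff_le_U hm).mpr ?_
    rw [hU]
    exact (cnt_le_iff_le_U hm).mp le_rfl

lemma iso_refl (M : Matroid (Fin n)) : Iso M M :=
  ⟨id, Set.injOn_id M.E, Matroid.map_id⟩

lemma iso_symm {M N : Matroid (Fin n)} (hME : M.E = univ) (hiso : Iso M N) : Iso N M := by
  obtain ⟨f, hf, hmap⟩ := hiso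
  have hinj : Function.Injective f := by
    have h := hf; rw [hME] at h; exact Set.injOn_univ.mp h
  have hsurj : Function.Surjective f := Finite.surjective_of_injective hinj
  have hbij : Function.Bijective f := ⟨hinj, hsurj⟩
  set e := Equiv.ofBijective f hbij with hedef
  set g : Fin n → Fin n := ⇑e.symm with hgdef
  have hgf : ∀ x, g (f x) = x := fun x => e.symm_apply_apply x
  have hfg : ∀ y, f (g y) = y := fun y => e.apply_symm_apply y
  have hginj : Function.Injective g := e.symm.injective
  refine ⟨g, Function.Injective.injOn hginj, ?_⟩
  refine Matroid.ext_indep ?_ ?_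
  · rw [Matroid.map_ground, ← hmap, Matroid.map_ground, hME]
    ext x
    constructor
    · rintro ⟨y, ⟨x', _, rfl⟩, rfl⟩
      rw [hgf]; trivial
    · intro _
      exact ⟨f x, ⟨x, trivial, rfl⟩, hgf x⟩
  · intro I _
    rw [Matroid.map_indep_iff]
    constructor
    · rintro ⟨I₀, hI₀, rfl⟩
      rw [← hmap] at hI₀
      obtain ⟨I₁, hI₁, rfl⟩ := Matroid.map_indep_iff.mp hI₀
      have himg : g '' (f '' I₁) = I₁ := by
        rw [← Set.image_comp]
        have hcomp : (g ∘ f) = id := funext hgf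
        rw [hcomp, Set.image_id]
      rw [himg]
      exact hI₁
    · intro hI
      refine ⟨f '' I, ?_, ?_⟩
      · rw [← hmap]; exact hI.map f hf
      · rw [← Set.image_comp]
        have : (g ∘ f) = id := funext hgf
        rw [this, Set.image_id]

lemma iso_trans {M N P : Matroid (Fin n)} (hiso1 : Iso M N) (hiso2 : Iso N P) : Iso M P := by
  obtain ⟨f, hf, rfl⟩ := hiso1
  obtain ⟨g, hg, rfl⟩ := hiso2
  refine ⟨g ∘ f, ?_, ?_⟩
  · intro a ha b hb hab
    exact hf ha hb (hg (⟨a, ha, rfl⟩) (⟨b, hb, rfl⟩) hab)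
  · refine Matroid.ext_indep ?_ ?_
    · simp only [Matroid.map_ground]; exact Set.image_comp g f M.E
    · intro I _
      simp only [Matroid.map_indep_iff]
      constructor
      · rintro ⟨I₀, hI₀, rfl⟩
        exact ⟨f '' I₀, hI₀.map f hf, by rw [Set.image_comp]⟩
      · rintro ⟨I₀, hI₀, rfl⟩
        obtain ⟨I₁, hI₁, rfl⟩ := hI₀
        exact ⟨I₁, hI₁, by rw [Set.image_comp]⟩

end IsoLemmas

section Surjectivity

variable {n : ℕ}

lemma nwIndep_iff_le_n {w : Fin n → Bool} {X : Set (Fin n)} :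
    NwIndep w X ↔ ∀ m, m ≤ n → (X ∩ pref n m).ncard ≤ cnt w m := by
  constructor
  · exact fun h m _ => h m
  · intro h m
    rcases le_or_gt m n with hm | hm
    · exact h m hm
    · rw [pref_eq_univ_of_le hm.le, cnt_stab w hm.le, ← pref_n_eq_univ]
      exact h n le_rfl

lemma exists_word_iso {M : Matroid (Fin n)} (hE : M.E = univ) (hN : Nested M) :
    ∃ w : Fin n → Bool, cnt w n = rk M univ ∧ Iso M (Nw w) := by
  classical
  set κ : Fin n → ℕ := fun x => (⋂₀ {F | CyclicFlat M F ∧ x ∈ F}).ncard with hκ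
  have hmem_le : ∀ (F : Set (Fin n)), CyclicFlat M F → ∀ x ∈ F, κ x ≤ F.ncard := by
    intro F hF x hx
    exact Set.ncard_le_ncard (sInter_subset_of_mem ⟨hF, hx⟩) (Set.toFinite F)
  have hnot_gt : ∀ F, CyclicFlat M F → ∀ x, x ∉ F → F.ncard < κ x := by
    intro F hF x hx
    have hFsub : F ⊆ ⋂₀ {G | CyclicFlat M G ∧ x ∈ G} := by
      refine subset_sInter ?_
      rintro G ⟨hG, hxG⟩
      rcases hN hF hG with hsub | hsub
      · exact hsub
      · exact absurd (hsub hxG) hx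
    have hxmem : x ∈ ⋂₀ {G | CyclicFlat M G ∧ x ∈ G} := by
      refine mem_sInter.mpr ?_
      rintro G ⟨_, hxG⟩
      exact hxG
    have hne : F ≠ ⋂₀ {G | CyclicFlat M G ∧ x ∈ G} := fun hcon => hx (hcon ▸ hxmem)
    exact Set.ncard_lt_ncard (HasSubset.Subset.ssubset_of_ne hFsub hne) (Set.toFinite _)
  set σ : Equiv.Perm (Fin n) := Tuple.sort κ with hσ
  have hσmono : Monotone (κ ∘ ⇑σ) := Tuple.monotone_sort κ
  set P : ℕ → Set (Fin n) := fun m => ⇑σ '' pref n m with hPdef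
  have hP0 : P 0 = ∅ := by
    have : pref n 0 = (∅ : Set (Fin n)) := by ext j; simp [mem_pref]
    simp [hPdef, this]
  have hPn : P n = univ := by
    rw [hPdef]
    simp only [pref_n_eq_univ]
    rw [Set.image_univ]
    exact Set.range_eq_univ.mpr σ.surjective
  have hPmono : ∀ {m m'}, m ≤ m' → P m ⊆ P m' := by
    intro m m' hmm
    exact Set.image_mono (fun j hj => lt_of_lt_of_le hj hmm)
  have hPsucc : ∀ (m : ℕ) (hmn : m < n), P (m + 1) = insert (σ ⟨m, hmn⟩) (P m) := by
    intro m hmn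
    have hpref : pref n (m + 1) = insert (⟨m, hmn⟩ : Fin n) (pref n m) := by
      ext j
      simp only [mem_pref, Set.mem_insert_iff]
      constructor
      · intro hj
        rcases Nat.lt_succ_iff_lt_or_eq.mp hj with h' | h'
        · exact Or.inr h'
        · exact Or.inl (Fin.ext (by simpa using h'))
      · rintro (rfl | hj)
        · exact Nat.lt_succ_self m
        · exact Nat.lt_succ_of_lt hj
    rw [hPdef]
    simp only
    rw [hpref, Set.image_insert_eq]
  have hflatP : ∀ F, CyclicFlat M F → F = P (F.ncard) := by
    intro F hF
    have hlow : ∀ i j : Fin n, (i : ℕ) ≤ (j : ℕ) → σ j ∈ F → σ i ∈ F := by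
      intro i j hij hjF
      by_contra hiF
      have h1 := hmem_le F hF _ hjF
      have h2 := hnot_gt F hF _ hiF
      have h3 : (κ ∘ ⇑σ) i ≤ (κ ∘ ⇑σ) j := hσmono (show i ≤ j from hij)
      simp only [Function.comp_apply] at h3
      omega
    have hA : ⇑σ ⁻¹' F = pref n ((⇑σ ⁻¹' F).ncard) :=
      lower_set_eq_pref (fun i j hij hj => hlow i j hij hj)
    have hcardA : (⇑σ ⁻¹' F).ncard = F.ncard := by
      rw [← Equiv.image_symm_eq_preimage]
      exact Set.ncard_image_of_injective _ σ.symm.injective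
    calc F = ⇑σ '' (⇑σ ⁻¹' F) := (Set.image_preimage_eq F σ.surjective).symm
      _ = P F.ncard := by rw [hA, hcardA]
  set ρ : ℕ → ℕ := fun m => rk M (P m) with hρ
  set w : Fin n → Bool := fun j => decide (ρ ((j : ℕ) + 1) = ρ (j : ℕ) + 1) with hw
  have hstep : ∀ (m : ℕ), m < n → ρ (m + 1) = ρ m ∨ ρ (m + 1) = ρ m + 1 := by
    intro m hmn
    have h1 : ρ m ≤ ρ (m + 1) := rk_mono (hPmono (Nat.le_succ m))
    have h2 : ρ (m + 1) ≤ ρ m + 1 := by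
      show rk M (P (m + 1)) ≤ rk M (P m) + 1
      rw [hPsucc m hmn]
      exact rk_insert_le _
    omega
  have hcnt : ∀ m, m ≤ n → cnt w m = ρ m := by
    intro m
    induction m with
    | zero =>
      intro _
      rw [cnt_zero]
      show 0 = rk M (P 0)
      rw [hP0, rk_empty]
    | succ m ih =>
      intro hm
      have hmn : m < n := hm
      rw [cnt_succ w hmn, ih (le_of_lt hmn)]
      by_cases hc : ρ (m + 1) = ρ m + 1
      · have hwt : w ⟨m, hmn⟩ = true := by
          rw [hw]; simpa using hc
        rw [hwt, if_pos rfl, hc]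
      · have hwt : w ⟨m, hmn⟩ = false := by
          rw [hw]; simpa using hc
        rw [hwt]
        simp only [Bool.false_eq_true, if_false]
        rcases hstep m hmn with h' | h'
        · omega
        · exact absurd h' hc
  have hrkuniv : cnt w n = rk M univ := by
    rw [hcnt n le_rfl]
    show rk M (P n) = rk M univ
    rw [hPn]
  have hchar : ∀ K : Set (Fin n), M.Indep K ↔ ∀ m, m ≤ n → (K ∩ P m).ncard ≤ ρ m := by
    intro K
    constructor
    · intro hK m _
      exact ncard_le_rk inter_subset_right (hK.subset inter_subset_left)
    · intro hcond
      by_contra hKdep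
      have hdep : M.Dep K := ⟨hKdep, by rw [hE]; exact subset_univ K⟩
      obtain ⟨C, hCK, hC⟩ := exists_circuit_subset K hdep
      have hCF := cyclicFlat_closure_circuit hC
      have hFn : (M.closure C).ncard ≤ n := by
        calc (M.closure C).ncard ≤ (univ : Set (Fin n)).ncard :=
            Set.ncard_le_ncard (subset_univ _) Set.finite_univ
          _ = n := by simp [Set.ncard_univ]
      have hPF : M.closure C = P (M.closure C).ncard := hflatP _ hCF
      have hrkF : ρ ((M.closure C).ncard) = C.ncard - 1 := by
        show rk M (P (M.closure C).ncard) = _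
        rw [← hPF, rk_closure_eq hC.1.2, rk_circuit hC]
      have hCsub : C ⊆ K ∩ P (M.closure C).ncard :=
        subset_inter hCK (hPF ▸ M.subset_closure C hC.1.2)
      have h1 := Set.ncard_le_ncard hCsub (Set.toFinite _)
      have h2 := hcond (M.closure C).ncard hFn
      have h3 : 1 ≤ C.ncard := (Set.ncard_pos (Set.toFinite C)).mpr hC.nonempty
      omega
  have hginj : Function.Injective ⇑σ.symm := σ.symm.injective
  have hg : Set.InjOn ⇑σ.symm M.E := Function.Injective.injOn hginj
  refine ⟨w, hrkuniv, ⟨⇑σ.symm, hg, ?_⟩⟩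
  refine Matroid.ext_indep ?_ ?_
  · rw [Matroid.map_ground, hE, Set.image_univ, Set.range_eq_univ.mpr σ.symm.surjective, Nw_E]
  · intro I _
    rw [Matroid.map_indep_iff, Nw_indep_iff]
    constructor
    · rintro ⟨J, hJ, rfl⟩
      rw [nwIndep_iff_le_n]
      intro m hm
      have hKm := (hchar J).mp hJ m hm
      have himg : ⇑σ '' ((⇑σ.symm '' J) ∩ pref n m) = J ∩ P m := by
        rw [Set.image_inter σ.injective]
        congr 1
        rw [← Set.image_comp]
        have hcomp : (⇑σ ∘ ⇑σ.symm) = id := funext (fun x => σ.apply_symm_apply x)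
        rw [hcomp, Set.image_id]
      calc ((⇑σ.symm '' J) ∩ pref n m).ncard
          = (⇑σ '' ((⇑σ.symm '' J) ∩ pref n m)).ncard :=
            (Set.ncard_image_of_injective _ σ.injective).symm
        _ = (J ∩ P m).ncard := by rw [himg]
        _ ≤ ρ m := hKm
        _ = cnt w m := (hcnt m hm).symm
    · intro hI
      refine ⟨⇑σ '' I, ?_, ?_⟩
      · rw [hchar]
        intro m hm
        have h1 := hI m
        have himg : ⇑σ '' (I ∩ pref n m) = (⇑σ '' I) ∩ P m := Set.image_inter σ.injective
        calc ((⇑σ '' I) ∩ P m).ncard = (⇑σ '' (I ∩ pref n m)).ncard := by rw [himg]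
          _ = (I ∩ pref n m).ncard := Set.ncard_image_of_injective _ σ.injective
          _ ≤ cnt w m := h1
          _ = ρ m := hcnt m hm
      · rw [← Set.image_comp]
        have hcomp : (⇑σ.symm ∘ ⇑σ) = id := funext (fun x => σ.symm_apply_apply x)
        rw [hcomp, Set.image_id]

end Surjectivity

section Counting

variable {n : ℕ}

/-- the word associated to a finset of "coloop" positions -/
def wS (S : Finset (Fin n)) : Fin n → Bool := fun j => decide (j ∈ S)

lemma cnt_wS (S : Finset (Fin n)) : cnt (wS S) n = S.card := by
  rw [← ncard_trues (wS S)]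
  have hset : {j : Fin n | wS S j = true} = (S : Set (Fin n)) := by
    ext j; simp [wS]
  rw [hset, Set.ncard_coe_finset]

lemma wS_inj {S T : Finset (Fin n)} (hw : wS S = wS T) : S = T := by
  ext j
  have := congrFun hw j
  simpa [wS] using this

end Counting

/-- the number of isomorphism classes of nested matroids of rank
`r` on `n` elements is `n.choose r`. -/
theorem card_isoClasses_nested (n r : ℕ) (h : r ≤ n) :
    Set.ncard {C : Set (Matroid (Fin n)) |
      ∃ M : Matroid (Fin n), (M.E = Set.univ ∧ rk M M.E = r ∧ Nested M) ∧
        C = {N : Matroid (Fin n) |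
          N.E = Set.univ ∧ rk N N.E = r ∧ Nested N ∧ Iso M N}} = n.choose r := by
  classical
  set T : Set (Finset (Fin n)) := {S | S.card = r} with hT
  set Θ : Finset (Fin n) → Set (Matroid (Fin n)) := fun S =>
    {N : Matroid (Fin n) | N.E = Set.univ ∧ rk N N.E = r ∧ Nested N ∧ Iso (Nw (wS S)) N}
    with hΘ
  have hrkNw : ∀ S : Finset (Fin n), S ∈ T → rk (Nw (wS S)) (Nw (wS S)).E = r := by
    intro S hS
    rw [Nw_E, rk_Nw_univ, cnt_wS]
    exact hS
  have hself : ∀ S : Finset (Fin n), S ∈ T → Nw (wS S) ∈ Θ S := by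
    intro S hS
    exact ⟨Nw_E _, hrkNw S hS, nested_Nw _, iso_refl _⟩
  have hseteq : {C : Set (Matroid (Fin n)) |
      ∃ M : Matroid (Fin n), (M.E = Set.univ ∧ rk M M.E = r ∧ Nested M) ∧
        C = {N : Matroid (Fin n) |
          N.E = Set.univ ∧ rk N N.E = r ∧ Nested N ∧ Iso M N}} = Θ '' T := by
    ext C
    constructor
    · rintro ⟨M, ⟨hME, hMr, hMN⟩, rfl⟩
      have hMEu : rk M univ = r := by rwa [hME] at hMr
      obtain ⟨w, hcw, hiso⟩ := exists_word_iso hME hMN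
      set S : Finset (Fin n) := Finset.univ.filter (fun j => w j = true) with hSdef
      have hwS : wS S = w := by
        funext j
        cases hwj : w j <;> simp [wS, hSdef, Finset.mem_filter, hwj]
      have hScard : S ∈ T := by
        show S.card = r
        have h1 : cnt (wS S) n = S.card := cnt_wS S
        rw [hwS, hcw, hMEu] at h1
        omega
      refine ⟨S, hScard, ?_⟩
      rw [hΘ]
      simp only
      rw [hwS]
      ext N
      simp only [mem_setOf_eq]
      constructor
      · rintro ⟨h1, h2, h3, h4⟩
        exact ⟨h1, h2, h3, iso_trans hiso h4⟩
      · rintro ⟨h1, h2, h3, h4⟩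
        exact ⟨h1, h2, h3, iso_trans (iso_symm hME hiso) h4⟩
    · rintro ⟨S, hS, rfl⟩
      exact ⟨Nw (wS S), ⟨Nw_E _, hrkNw S hS, nested_Nw _⟩, rfl⟩
  have hinjΘ : Set.InjOn Θ T := by
    intro S hS S' hS' hSS
    have h1 := hself S hS
    rw [hSS] at h1
    have h2 : Iso (Nw (wS S')) (Nw (wS S)) := h1.2.2.2
    exact wS_inj (w_eq_of_iso h2).symm
  rw [hseteq, Set.ncard_image_of_injOn hinjΘ]
  have hTset : T = ↑(Finset.univ.powersetCard r : Finset (Finset (Fin n))) := by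
    ext S
    simp [hT, Finset.mem_powersetCard]
  rw [hTset, Set.ncard_coe_finset, Finset.card_powersetCard, Finset.card_univ, Fintype.card_fin]

end MatroidPaper
end

section
/- Let q ≥ 2 be an integer and let M be a simple rank-3 matroid with q² + q elements in which every line has q or q + 1 points. Then M has at least q + 1 lines with exactly q points; and M has exactly q + 1 lines with q points if and only if every element of M lies in exactly one q-point line, in which case these q + 1 lines are pairwise disjoint. -/
open Set Matroid
open scoped Matroid

namespace MatroidPaper

variable {α : Type*} {β : Type*}

section Aux

variable {M : Matroid α} {X I L J : Set α} {e f : α}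

lemma aux_closure_flat (M : Matroid α) (X : Set α) : M.IsFlat (M.closure X) := by
  have hne : Nonempty {F : Set α // M.IsFlat F ∧ X ∩ M.E ⊆ F} :=
    ⟨⟨M.E, M.ground_isFlat, inter_subset_right⟩⟩
  have h := Matroid.IsFlat.iInter (M := M)
    (Fs := fun F : {F : Set α // M.IsFlat F ∧ X ∩ M.E ⊆ F} => F.1) (fun F => F.2.1)
  rw [Matroid.closure_def, sInter_eq_iInter]
  convert h using 1
  rfl

lemma aux_rk_eq (hX : X.Finite) (hI : M.IsBasis I X) : rk M X = I.ncard := by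
  have hXE := hI.subset_ground
  apply le_antisymm
  · refine csSup_le ⟨0, ∅, empty_subset X, M.empty_indep, by simp⟩ ?_
    rintro n ⟨J, hJX, hJ, rfl⟩
    obtain ⟨J', hJ', hJJ'⟩ := hJ.subset_isBasis_of_subset hJX hXE
    exact le_trans (Set.ncard_le_ncard hJJ' (hX.subset hJ'.subset))
      (le_of_eq (hJ'.restrict_isBase.ncard_eq_ncard_of_isBase hI.restrict_isBase))
  · have hbdd : BddAbove {n | ∃ I, I ⊆ X ∧ M.Indep I ∧ I.ncard = n} := by
      refine ⟨X.ncard, ?_⟩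
      rintro n ⟨J, hJX, hJ, rfl⟩
      exact Set.ncard_le_ncard hJX hX
    exact le_csSup hbdd ⟨I, hI.subset, hI.indep, rfl⟩

lemma aux_pair_line (hE : M.E.Finite) (hs : Simple M) (he : e ∈ M.E) (hf : f ∈ M.E)
    (hef : e ≠ f) :
    M.IsFlat (M.closure {e, f}) ∧ rk M (M.closure {e, f}) = 2 ∧
      e ∈ M.closure {e, f} ∧ f ∈ M.closure {e, f} := by
  have hpair : ({e, f} : Set α) ⊆ M.E := by
    rw [insert_subset_iff, singleton_subset_iff]; exact ⟨he, hf⟩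
  have hind : M.Indep {e, f} := hs he hf
  have hsub := M.subset_closure {e, f} hpair
  refine ⟨aux_closure_flat M _, ?_, hsub (by simp), hsub (by simp)⟩
  rw [aux_rk_eq (hE.subset (M.closure_subset_ground _)) hind.isBasis_closure, Set.ncard_pair hef]

lemma aux_line_eq (hE : M.E.Finite) (hs : Simple M) (hL : M.IsFlat L) (hr : rk M L = 2)
    (he : e ∈ L) (hf : f ∈ L) (hef : e ≠ f) : L = M.closure {e, f} := by
  have hLE := hL.subset_ground
  have hLfin := hE.subset hLE
  have hind : M.Indep {e, f} := hs (hLE he) (hLE hf)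
  have hpairL : ({e, f} : Set α) ⊆ L := by
    rw [insert_subset_iff, singleton_subset_iff]; exact ⟨he, hf⟩
  obtain ⟨J, hJ, hsubJ⟩ := hind.subset_isBasis_of_subset hpairL hLE
  have hJ2 : J.ncard = 2 := by rw [← aux_rk_eq hLfin hJ, hr]
  have hJeq : ({e, f} : Set α) = J :=
    Set.eq_of_subset_of_ncard_le hsubJ (by rw [hJ2, Set.ncard_pair hef])
      (hLfin.subset hJ.subset)
  refine subset_antisymm ?_ ?_
  · rw [hJeq]; exact hJ.subset_closure
  · rw [← hL.closure]; exact M.closure_subset_closure hpairL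

end Aux

/-- a simple rank-3 matroid with `q² + q` elements whose lines all
have `q` or `q + 1` points has at least `q + 1` lines with `q` points; it has
exactly `q + 1` such lines iff every element lies in exactly one `q`-point line,
and in that case these lines are pairwise disjoint. -/
theorem qPointLines_bound (q : ℕ) (hq : 2 ≤ q) (M : Matroid α) (hE : M.E.Finite)
    (hs : Simple M) (hrk : rk M M.E = 3) (hcard : M.E.ncard = q ^ 2 + q)
    (hlines : ∀ L : Set α, M.IsFlat L → rk M L = 2 → L.ncard = q ∨ L.ncard = q + 1) :
    q + 1 ≤ Set.ncard {L : Set α | M.IsFlat L ∧ rk M L = 2 ∧ L.ncard = q} ∧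
    (Set.ncard {L : Set α | M.IsFlat L ∧ rk M L = 2 ∧ L.ncard = q} = q + 1 ↔
      ∀ e ∈ M.E, ∃! L : Set α, (M.IsFlat L ∧ rk M L = 2 ∧ L.ncard = q) ∧ e ∈ L) ∧
    (Set.ncard {L : Set α | M.IsFlat L ∧ rk M L = 2 ∧ L.ncard = q} = q + 1 →
      ∀ L L' : Set α, (M.IsFlat L ∧ rk M L = 2 ∧ L.ncard = q) →
        (M.IsFlat L' ∧ rk M L' = 2 ∧ L'.ncard = q) → L ≠ L' → Disjoint L L') := by
  classical
  have hq0 : 0 < q := by omega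
  set 𝓛 := {L : Set α | M.IsFlat L ∧ rk M L = 2 ∧ L.ncard = q} with h𝓛def
  have h𝓛fin : 𝓛.Finite := hE.finite_subsets.subset fun L hL => hL.1.subset_ground
  set s : Finset (Set α) := h𝓛fin.toFinset with hsdef
  have hmem_s : ∀ {L : Set α}, L ∈ s ↔ (M.IsFlat L ∧ rk M L = 2 ∧ L.ncard = q) := by
    intro L
    rw [hsdef, Set.Finite.mem_toFinset]
    exact Iff.rfl
  set t : Finset α := hE.toFinset with htdef
  have hmem_t : ∀ {x : α}, x ∈ t ↔ x ∈ M.E := fun {x} => Set.Finite.mem_toFinset hE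
  have htcard : t.card = q ^ 2 + q := by
    rw [htdef, ← Set.ncard_eq_toFinset_card _ hE, hcard]
  have h𝓛card : 𝓛.ncard = s.card := Set.ncard_eq_toFinset_card _ h𝓛fin
  set a : α → ℕ := fun e => (s.filter fun L => e ∈ L).card with hadef
  -- Claim 1 : every element lies on a q-point line.
  have claim1 : ∀ e ∈ M.E, 1 ≤ a e := by
    intro e heE
    rw [Nat.one_le_iff_ne_zero]
    intro h0
    have hnot : ∀ L, (M.IsFlat L ∧ rk M L = 2 ∧ L.ncard = q) → e ∉ L := by
      intro L hL heL
      have hmem : L ∈ s.filter fun L => e ∈ L := Finset.mem_filter.2 ⟨hmem_s.2 hL, heL⟩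
      have : (s.filter fun L => e ∈ L) = ∅ := Finset.card_eq_zero.1 h0
      rw [this] at hmem
      exact absurd hmem (Finset.notMem_empty L)
    set u : Finset α := t.erase e with hudef
    have hucard : u.card + 1 = q ^ 2 + q := by
      rw [hudef, Finset.card_erase_add_one (hmem_t.2 heE), htcard]
    set φ : α → Set α := fun f => M.closure {e, f} with hφdef
    have hφ : ∀ f, φ f = M.closure {e, f} := fun f => rfl
    have hmemim : ∀ f ∈ u, φ f ∈ u.image φ := fun f hf => Finset.mem_image_of_mem _ hf
    have hfib := Finset.card_eq_sum_card_fiberwise hmemim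
    have hfibcard : ∀ L ∈ u.image φ, (u.filter fun f => φ f = L).card = q := by
      intro L hL
      obtain ⟨f0, hf0u, rfl⟩ := Finset.mem_image.1 hL
      rw [hφ]
      have hf0e : f0 ≠ e := Finset.ne_of_mem_erase hf0u
      have hf0E : f0 ∈ M.E := hmem_t.1 (Finset.mem_of_mem_erase hf0u)
      obtain ⟨hflat, hr2, heL, hfL⟩ := aux_pair_line hE hs heE hf0E (Ne.symm hf0e)
      have hLE := hflat.subset_ground
      have hLfin : (M.closure {e, f0}).Finite := hE.subset hLE
      have hfibset : ↑(u.filter fun f => φ f = M.closure {e, f0})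
          = M.closure {e, f0} \ {e} := by
        ext f
        simp only [Finset.coe_filter, mem_setOf_eq, hudef, Finset.mem_erase, hmem_t,
          mem_diff, mem_singleton_iff, hφ]
        constructor
        · rintro ⟨⟨hfe, hfE⟩, hEq⟩
          have hfmem : f ∈ M.closure {e, f} :=
            M.subset_closure {e, f} (by
              rw [insert_subset_iff, singleton_subset_iff]; exact ⟨heE, hfE⟩) (by simp)
          rw [hEq] at hfmem
          exact ⟨hfmem, hfe⟩
        · rintro ⟨hfL', hfe⟩
          have hfE : f ∈ M.E := hLE hfL'
          exact ⟨⟨hfe, hfE⟩, (aux_line_eq hE hs hflat hr2 heL hfL' (Ne.symm hfe)).symm⟩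
      have hcard1 : (u.filter fun f => φ f = M.closure {e, f0}).card
          = (M.closure {e, f0} \ {e}).ncard := by
        rw [← hfibset, Set.ncard_coe_finset]
      have hcardL : (M.closure {e, f0}).ncard = q + 1 := by
        rcases hlines _ hflat hr2 with h | h
        · exact absurd heL (hnot _ ⟨hflat, hr2, h⟩)
        · exact h
      rw [hcard1, Set.ncard_diff_singleton_of_mem heL, hcardL, Nat.add_sub_cancel]
    have hEq' : u.card = q * (u.image φ).card := by
      rw [hfib, Finset.sum_congr rfl hfibcard, Finset.sum_const, smul_eq_mul, mul_comm]
    have h2 : q * (u.image φ).card + 1 = q * (q + 1) := by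
      calc q * (u.image φ).card + 1 = u.card + 1 := by rw [hEq']
        _ = q ^ 2 + q := hucard
        _ = q * (q + 1) := by ring
    have hd : q ∣ 1 := by
      have hd1 : q ∣ q * (u.image φ).card + 1 := by
        rw [h2]; exact ⟨q + 1, rfl⟩
      exact (Nat.dvd_add_right ⟨(u.image φ).card, rfl⟩).1 hd1
    have := Nat.le_of_dvd one_pos hd
    omega
  -- Each q-point line contains exactly q elements of the ground set.
  have hcover : ∀ L ∈ s, (t.filter fun x => x ∈ L).card = q := by
    intro L hL
    obtain ⟨hflat, -, hncard⟩ := hmem_s.1 hL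
    have hLfin : L.Finite := hE.subset hflat.subset_ground
    have hfeq : (t.filter fun x => x ∈ L) = hLfin.toFinset := by
      ext x
      simp only [Finset.mem_filter, hmem_t, Set.Finite.mem_toFinset]
      exact ⟨fun h => h.2, fun h => ⟨hflat.subset_ground h, h⟩⟩
    rw [hfeq, ← Set.ncard_eq_toFinset_card _ hLfin, hncard]
  -- Double counting.
  have hdouble : ∑ e ∈ t, a e = q * s.card := by
    have h1 : ∀ e ∈ t, a e = ∑ L ∈ s, if e ∈ L then 1 else 0 := fun e _ =>
      Finset.card_filter _ _
    calc ∑ e ∈ t, a e = ∑ e ∈ t, ∑ L ∈ s, if e ∈ L then 1 else 0 :=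
          Finset.sum_congr rfl h1
      _ = ∑ L ∈ s, ∑ e ∈ t, if e ∈ L then 1 else 0 := Finset.sum_comm
      _ = ∑ L ∈ s, (t.filter fun x => x ∈ L).card :=
          Finset.sum_congr rfl fun L _ => (Finset.card_filter _ _).symm
      _ = ∑ L ∈ s, q := Finset.sum_congr rfl hcover
      _ = q * s.card := by rw [Finset.sum_const, smul_eq_mul, mul_comm]
  have hlow : q * (q + 1) ≤ q * s.card := by
    calc q * (q + 1) = q ^ 2 + q := by ring
      _ = t.card := htcard.symm
      _ = ∑ _e ∈ t, 1 := by simp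
      _ ≤ ∑ e ∈ t, a e := Finset.sum_le_sum fun e he => claim1 e (hmem_t.1 he)
      _ = q * s.card := hdouble
  have hmain : q + 1 ≤ s.card := Nat.le_of_mul_le_mul_left hlow hq0
  have hall1 : s.card = q + 1 → ∀ e ∈ M.E, a e = 1 := by
    intro hscard e heE
    have hsum : ∑ _e ∈ t, 1 = ∑ e ∈ t, a e := by
      rw [hdouble, hscard, Finset.sum_const, smul_eq_mul, mul_one, htcard]; ring
    exact ((Finset.sum_eq_sum_iff_of_le fun e he => claim1 e (hmem_t.1 he)).1 hsum e
      (hmem_t.2 heE)).symm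
  refine ⟨h𝓛card ▸ hmain, ?_, ?_⟩
  · rw [h𝓛card]
    constructor
    · intro hscard e heE
      obtain ⟨L₀, hL₀⟩ := Finset.card_eq_one.1 (hall1 hscard e heE)
      have hmemf : ∀ {L}, L ∈ s.filter (fun L => e ∈ L) ↔
          ((M.IsFlat L ∧ rk M L = 2 ∧ L.ncard = q) ∧ e ∈ L) := by
        intro L
        rw [Finset.mem_filter, hmem_s]
      refine ⟨L₀, hmemf.1 (hL₀ ▸ Finset.mem_singleton_self L₀), fun L hL => ?_⟩
      have hLm := hmemf.2 hL
      rw [hL₀] at hLm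
      exact Finset.mem_singleton.1 hLm
    · intro h
      have hae : ∀ e ∈ t, a e = 1 := by
        intro e het
        obtain ⟨L₀, hL₀, huniq⟩ := h e (hmem_t.1 het)
        rw [hadef]
        rw [Finset.card_eq_one]
        refine ⟨L₀, ?_⟩
        ext L
        rw [Finset.mem_filter, Finset.mem_singleton]
        constructor
        · rintro ⟨hLs, heL⟩
          exact huniq L ⟨hmem_s.1 hLs, heL⟩
        · rintro rfl
          exact ⟨hmem_s.2 hL₀.1, hL₀.2⟩
      have hmul : q * s.card = q * (q + 1) := by
        rw [← hdouble, Finset.sum_congr rfl hae, Finset.sum_const, smul_eq_mul, mul_one,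
          htcard]
        ring
      exact Nat.eq_of_mul_eq_mul_left hq0 hmul
  · rw [h𝓛card]
    intro hscard L L' hL hL' hne
    rw [Set.disjoint_left]
    intro x hxL hxL'
    have hxE : x ∈ M.E := hL.1.subset_ground hxL
    obtain ⟨L₀, hL₀⟩ := Finset.card_eq_one.1 (hall1 hscard x hxE)
    have m1 : L ∈ s.filter (fun K => x ∈ K) := Finset.mem_filter.2 ⟨hmem_s.2 hL, hxL⟩
    have m2 : L' ∈ s.filter (fun K => x ∈ K) := Finset.mem_filter.2 ⟨hmem_s.2 hL', hxL'⟩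
    rw [hL₀, Finset.mem_singleton] at m1 m2
    exact hne (m1.trans m2.symm)

end MatroidPaper
end
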